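/- Let R be a ring such that every projective left R-module has injective dimension at most n (i.e. silp(R) ≤ n < ∞). Then every acyclic complex of projective left R-modules is totally acyclic, i.e. for every such exact complex P of projectives and every projective left R-module M, the complex Hom_R(P, M) is exact. -/

import Mathlib

noncomputable section

open LinearMap MulOpposite TensorProduct

/-- A (doubly infinite, cohomologically indexed) complex of `R`-modules. -/
structure Cx (R : Type) [Ring R] where
  X : ℤ → ModuleCat.{0} R
  d : ∀ n : ℤ, X n →ₗ[R] X (n + 1)
  dd : ∀ n : ℤ, (d (n + 1)).comp (d n) = 0

namespace Cx

variable {R : Type} [Ring R]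

/-- The complex is exact (acyclic) everywhere. -/
def Acyclic (C : Cx R) : Prop :=
  ∀ n : ℤ, LinearMap.range (C.d n) = LinearMap.ker (C.d (n + 1))

/-- Exactness of the induced complex `Hom_R(C, M)`. -/
def HomOutExact (C : Cx R) (M : ModuleCat.{0} R) : Prop :=
  ∀ (n : ℤ) (f : C.X (n + 1) →ₗ[R] M), f.comp (C.d n) = 0 →
    ∃ g : C.X (n + 1 + 1) →ₗ[R] M, g.comp (C.d (n + 1)) = f

/-- Exactness of the induced complex `Hom_R(J, C)`. -/
def HomInExact (C : Cx R) (J : ModuleCat.{0} R) : Prop :=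
  ∀ (n : ℤ) (f : J →ₗ[R] C.X (n + 1)), (C.d (n + 1)).comp f = 0 →
    ∃ g : J →ₗ[R] C.X n, (C.d n).comp g = f

end Cx

section Tensor

variable (R : Type) [Ring R]

/-- The defining relations of the tensor product `E ⊗_R M` of a right `R`-module `E`
and a left `R`-module `M`, inside `E ⊗_ℤ M`. -/
def ncRel (E : ModuleCat.{0} Rᵐᵒᵖ) (M : ModuleCat.{0} R) :
    Submodule ℤ (TensorProduct ℤ E M) :=
  Submodule.span ℤ
    {x | ∃ (r : R) (e : E) (m : M), x = (op r • e) ⊗ₜ[ℤ] m - e ⊗ₜ[ℤ] (r • m)}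

/-- The tensor product `E ⊗_R M` of a right `R`-module and a left `R`-module. -/
abbrev NCT (E : ModuleCat.{0} Rᵐᵒᵖ) (M : ModuleCat.{0} R) : Type :=
  TensorProduct ℤ E M ⧸ ncRel R E M

/-- Functoriality of `E ⊗_R -` in the left module argument. -/
def tmapR (E : ModuleCat.{0} Rᵐᵒᵖ) {M N : ModuleCat.{0} R} (f : M →ₗ[R] N) :
    NCT R E M →ₗ[ℤ] NCT R E N :=
  Submodule.mapQ _ _
    (TensorProduct.map LinearMap.id f.toAddMonoidHom.toIntLinearMap) (by
      rw [ncRel, Submodule.span_le]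
      rintro x ⟨r, e, m, rfl⟩
      show TensorProduct.map LinearMap.id f.toAddMonoidHom.toIntLinearMap ((op r • e) ⊗ₜ[ℤ] m - e ⊗ₜ[ℤ] (r • m)) ∈ ncRel R E N
      rw [map_sub, TensorProduct.map_tmul, TensorProduct.map_tmul]
      simp only [LinearMap.id_coe, id_eq, AddMonoidHom.coe_toIntLinearMap,
        LinearMap.toAddMonoidHom_coe, f.map_smul]
      exact Submodule.subset_span ⟨r, e, f m, rfl⟩)

/-- Functoriality of `- ⊗_R M` in the right module argument. -/
def tmapL {A B : ModuleCat.{0} Rᵐᵒᵖ} (g : A →ₗ[Rᵐᵒᵖ] B) (M : ModuleCat.{0} R) :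
    NCT R A M →ₗ[ℤ] NCT R B M :=
  Submodule.mapQ _ _
    (TensorProduct.map g.toAddMonoidHom.toIntLinearMap LinearMap.id) (by
      rw [ncRel, Submodule.span_le]
      rintro x ⟨r, e, m, rfl⟩
      show TensorProduct.map g.toAddMonoidHom.toIntLinearMap LinearMap.id ((op r • e) ⊗ₜ[ℤ] m - e ⊗ₜ[ℤ] (r • m)) ∈ ncRel R B M
      rw [map_sub, TensorProduct.map_tmul, TensorProduct.map_tmul]
      simp only [LinearMap.id_coe, id_eq, AddMonoidHom.coe_toIntLinearMap,
        LinearMap.toAddMonoidHom_coe, g.map_smul]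
      exact Submodule.subset_span ⟨r, g e, m, rfl⟩)

end Tensor

/-- Exactness of the induced complex `E ⊗_R C` for a complex `C` of left `R`-modules. -/
def Cx.TensorExact {R : Type} [Ring R] (C : Cx R) (E : ModuleCat.{0} Rᵐᵒᵖ) : Prop :=
  ∀ n : ℤ, LinearMap.range (tmapR R E (C.d n)) = LinearMap.ker (tmapR R E (C.d (n + 1)))

section Tensor2

variable (R : Type) [Ring R]

/-- A left `R`-module `M` is flat if `- ⊗_R M` preserves injections of right modules. -/
def IsFlat (M : ModuleCat.{0} R) : Prop :=
  ∀ (A B : ModuleCat.{0} Rᵐᵒᵖ) (g : A →ₗ[Rᵐᵒᵖ] B),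
    Function.Injective g → Function.Injective (tmapL R g M)

/-- A right `R`-module `E` is flat if `E ⊗_R -` preserves injections of left modules. -/
def IsFlatR (E : ModuleCat.{0} Rᵐᵒᵖ) : Prop :=
  ∀ (M N : ModuleCat.{0} R) (f : M →ₗ[R] N),
    Function.Injective f → Function.Injective (tmapR R E f)

end Tensor2

section Dims

variable (R : Type) [Ring R]

/-- `M` has injective dimension at most `n`. -/
def InjDimLE (M : ModuleCat.{0} R) (n : ℕ) : Prop :=
  ∃ (E : ℕ → ModuleCat.{0} R) (d : ∀ i, E i →ₗ[R] E (i + 1)) (ε : M →ₗ[R] E 0),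
    (∀ i, Module.Injective R (E i)) ∧ Function.Injective ε ∧
    LinearMap.range ε = LinearMap.ker (d 0) ∧
    (∀ i, LinearMap.range (d i) = LinearMap.ker (d (i + 1))) ∧
    (∀ i, n < i → Subsingleton (E i))

/-- `M` has projective dimension at most `n`. -/
def ProjDimLE (M : ModuleCat.{0} R) (n : ℕ) : Prop :=
  ∃ (P : ℕ → ModuleCat.{0} R) (d : ∀ i, P (i + 1) →ₗ[R] P i) (ε : P 0 →ₗ[R] M),
    (∀ i, Module.Projective R (P i)) ∧ Function.Surjective ε ∧
    LinearMap.range (d 0) = LinearMap.ker ε ∧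
    (∀ i, LinearMap.range (d (i + 1)) = LinearMap.ker (d i)) ∧
    (∀ i, n < i → Subsingleton (P i))

/-- The left `R`-module `M` has flat dimension at most `n`. -/
def FlatDimLE (M : ModuleCat.{0} R) (n : ℕ) : Prop :=
  ∃ (F : ℕ → ModuleCat.{0} R) (d : ∀ i, F (i + 1) →ₗ[R] F i) (ε : F 0 →ₗ[R] M),
    (∀ i, IsFlat R (F i)) ∧ Function.Surjective ε ∧
    LinearMap.range (d 0) = LinearMap.ker ε ∧
    (∀ i, LinearMap.range (d (i + 1)) = LinearMap.ker (d i)) ∧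
    (∀ i, n < i → Subsingleton (F i))

/-- The right `R`-module `E` has flat dimension at most `n` (as a right module). -/
def FlatDimRLE (E : ModuleCat.{0} Rᵐᵒᵖ) (n : ℕ) : Prop :=
  ∃ (F : ℕ → ModuleCat.{0} Rᵐᵒᵖ) (d : ∀ i, F (i + 1) →ₗ[Rᵐᵒᵖ] F i) (ε : F 0 →ₗ[Rᵐᵒᵖ] E),
    (∀ i, IsFlatR R (F i)) ∧ Function.Surjective ε ∧
    LinearMap.range (d 0) = LinearMap.ker ε ∧
    (∀ i, LinearMap.range (d (i + 1)) = LinearMap.ker (d i)) ∧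
    (∀ i, n < i → Subsingleton (F i))

end Dims

section Conditions

variable (R : Type) [Ring R]

/-- Every acyclic complex of projective left `R`-modules is totally acyclic. -/
def AllProjTotAc : Prop :=
  ∀ C : Cx R, C.Acyclic → (∀ n, Module.Projective R (C.X n)) →
    ∀ M : ModuleCat.{0} R, Module.Projective R M → C.HomOutExact M

/-- Every acyclic complex of injective left `R`-modules is totally acyclic. -/
def AllInjTotAc : Prop :=
  ∀ C : Cx R, C.Acyclic → (∀ n, Module.Injective R (C.X n)) →
    ∀ J : ModuleCat.{0} R, Module.Injective R J → C.HomInExact J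

/-- Every acyclic complex of flat left `R`-modules is F-totally acyclic. -/
def AllFlatFTotAc : Prop :=
  ∀ C : Cx R, C.Acyclic → (∀ n, IsFlat R (C.X n)) →
    ∀ E : ModuleCat.{0} Rᵐᵒᵖ, Module.Injective Rᵐᵒᵖ E → C.TensorExact E

/-- Every acyclic complex of projective left `R`-modules is F-totally acyclic. -/
def AllProjFTotAc : Prop :=
  ∀ C : Cx R, C.Acyclic → (∀ n, Module.Projective R (C.X n)) →
    ∀ E : ModuleCat.{0} Rᵐᵒᵖ, Module.Injective Rᵐᵒᵖ E → C.TensorExact E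

end Conditions

section Gorenstein

variable (R : Type) [Ring R]

/-- `M` is Gorenstein projective: a cycle of a totally acyclic complex of projectives. -/
def IsGProj (M : ModuleCat.{0} R) : Prop :=
  ∃ (C : Cx R) (n : ℤ), C.Acyclic ∧ (∀ k, Module.Projective R (C.X k)) ∧
    (∀ Q : ModuleCat.{0} R, Module.Projective R Q → C.HomOutExact Q) ∧
    Nonempty (M ≃ₗ[R] LinearMap.ker (C.d n))

/-- `M` is Gorenstein injective: a cycle of a totally acyclic complex of injectives. -/
def IsGInj (M : ModuleCat.{0} R) : Prop :=
  ∃ (C : Cx R) (n : ℤ), C.Acyclic ∧ (∀ k, Module.Injective R (C.X k)) ∧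
    (∀ J : ModuleCat.{0} R, Module.Injective R J → C.HomInExact J) ∧
    Nonempty (M ≃ₗ[R] LinearMap.ker (C.d n))

/-- `M` is Gorenstein flat: a cycle of an F-totally acyclic complex of flats. -/
def IsGFlat (M : ModuleCat.{0} R) : Prop :=
  ∃ (C : Cx R) (n : ℤ), C.Acyclic ∧ (∀ k, IsFlat R (C.X k)) ∧
    (∀ E : ModuleCat.{0} Rᵐᵒᵖ, Module.Injective Rᵐᵒᵖ E → C.TensorExact E) ∧
    Nonempty (M ≃ₗ[R] LinearMap.ker (C.d n))

end Gorenstein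

section CharM

/-- The character group `Hom_ℤ(M, ℚ/ℤ)`. -/
abbrev CharM (M : Type) [AddCommGroup M] : Type := M →+ AddCircle (1 : ℚ)

/-- The character module of a left module is a right module. -/
instance charModuleOp (S : Type) [Ring S] (M : Type) [AddCommGroup M] [Module S M] :
    Module Sᵐᵒᵖ (CharM M) where
  smul s f := f.comp (DistribMulAction.toAddMonoidHom M s.unop)
  one_smul f := by apply AddMonoidHom.ext; intro m; show f ((1 : S) • m) = f m; rw [one_smul]
  mul_smul s t f := by
    apply AddMonoidHom.ext; intro m
    show f (((s * t).unop) • m) = f (t.unop • s.unop • m)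
    rw [MulOpposite.unop_mul, mul_smul]
  smul_zero s := by apply AddMonoidHom.ext; intro m; rfl
  smul_add s f g := by apply AddMonoidHom.ext; intro m; rfl
  add_smul s t f := by
    apply AddMonoidHom.ext; intro m
    show f (((s + t).unop) • m) = f (s.unop • m) + f (t.unop • m)
    rw [MulOpposite.unop_add, add_smul, map_add]
  zero_smul f := by
    apply AddMonoidHom.ext; intro m
    show f ((0 : S) • m) = 0
    rw [zero_smul, map_zero]

/-- The character module of a right module is a left module. -/
instance charModuleLeft (S : Type) [Ring S] (M : Type) [AddCommGroup M] [Module Sᵐᵒᵖ M] :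
    Module S (CharM M) where
  smul s f := f.comp (DistribMulAction.toAddMonoidHom M (op s))
  one_smul f := by
    apply AddMonoidHom.ext; intro m
    show f ((op (1 : S)) • m) = f m
    rw [op_one, one_smul]
  mul_smul s t f := by
    apply AddMonoidHom.ext; intro m
    show f ((op (s * t)) • m) = f (op t • op s • m)
    rw [op_mul, mul_smul]
  smul_zero s := by apply AddMonoidHom.ext; intro m; rfl
  smul_add s f g := by apply AddMonoidHom.ext; intro m; rfl
  add_smul s t f := by
    apply AddMonoidHom.ext; intro m
    show f ((op (s + t)) • m) = f (op s • m) + f (op t • m)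
    rw [op_add, add_smul, map_add]
  zero_smul f := by
    apply AddMonoidHom.ext; intro m
    show f ((op (0 : S)) • m) = 0
    rw [op_zero, zero_smul, map_zero]

end CharM

section Ext

variable (R : Type) [Ring R]

/-- `Ext^1_R(F, M) = 0`, phrased as: every extension of `F` by `M` splits. -/
def Ext1Zero (F M : ModuleCat.{0} R) : Prop :=
  ∀ (X : ModuleCat.{0} R) (i : M →ₗ[R] X) (p : X →ₗ[R] F),
    Function.Injective i → Function.Surjective p →
    LinearMap.range i = LinearMap.ker p →
    ∃ s : F →ₗ[R] X, p.comp s = LinearMap.id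

/-- `Ext^k_R(M, N) = 0` (for `k ≥ 1`), phrased via vanishing of the `k`-th cohomology of
`Hom_R(P_•, N)` for every (augmented) projective resolution `⋯ → Q (i+1) → Q i → ⋯ → Q 0 ≅ M`. -/
def ExtVanish (k : ℕ) (M N : ModuleCat.{0} R) : Prop :=
  ∀ (Q : ℕ → ModuleCat.{0} R) (g : ∀ i, Q (i + 1) →ₗ[R] Q i),
    (∀ i, Module.Projective R (Q (i + 1))) → Function.Surjective (g 0) →
    (∀ i, LinearMap.range (g (i + 1)) = LinearMap.ker (g i)) →
    Nonempty (M ≃ₗ[R] Q 0) →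
    ∀ f : Q (k + 1) →ₗ[R] N, f.comp (g (k + 1)) = 0 →
      ∃ h : Q k →ₗ[R] N, h.comp (g k) = f

end Ext

/-!
By induction on the injective dimension of `M`. For injective `M`, `Hom_R(-, M)` is exact, so
it carries the acyclic complex to an exact one. Otherwise embed `M` into an injective `E` with
cokernel `N` of smaller injective dimension; a diagram chase through `0 → M → E → N → 0`, lifting
along `E → N` by projectivity of the terms of the complex, transfers exactness of `Hom_R(P, E)`
and `Hom_R(P, N)` to `Hom_R(P, M)`.
-/

section Factorization

variable {R : Type} [Ring R] {X Y M E N : Type} [AddCommGroup X] [Module R X]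
  [AddCommGroup Y] [Module R Y] [AddCommGroup M] [Module R M] [AddCommGroup E] [Module R E]
  [AddCommGroup N] [Module R N]

theorem Module.Injective.exists_comp_eq_of_ker_le [Module.Injective R M] (D : X →ₗ[R] Y)
    (f : X →ₗ[R] M) (hf : LinearMap.ker D ≤ LinearMap.ker f) :
    ∃ g : Y →ₗ[R] M, g ∘ₗ D = f := by
  let f' : LinearMap.range D →ₗ[R] M :=
    (LinearMap.ker D).liftQ f hf ∘ₗ D.quotKerEquivRange.symm.toLinearMap
  obtain ⟨g, hg⟩ := Module.Injective.extension_property R M _ _ (LinearMap.range D).subtype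
    Subtype.val_injective f'
  refine ⟨g, LinearMap.ext fun x => ?_⟩
  have hgx := LinearMap.congr_fun hg ⟨D x, x, rfl⟩
  simp only [LinearMap.comp_apply, Submodule.coe_subtype] at hgx
  rw [LinearMap.comp_apply, hgx, LinearMap.comp_apply, LinearEquiv.coe_coe]
  exact (congrArg _ (D.quotKerEquivRange_symm_apply_image x _)).trans (Submodule.liftQ_apply ..)

theorem Function.Exact.exists_comp_eq_of_comp_eq_zero {ε : M →ₗ[R] E} {π : E →ₗ[R] N}
    (hεπ : Function.Exact ε π) (hε : Function.Injective ε) (K : X →ₗ[R] E) (hK : π ∘ₗ K = 0) :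
    ∃ g : X →ₗ[R] M, ε ∘ₗ g = K := by
  have hKmem : ∀ x, K x ∈ LinearMap.range ε := fun x =>
    (hεπ (K x)).mp (LinearMap.congr_fun hK x)
  refine ⟨(LinearEquiv.ofInjective ε hε).symm.toLinearMap ∘ₗ K.codRestrict _ hKmem,
    LinearMap.ext fun x => ?_⟩
  simp

end Factorization

section InjectiveDimension

variable {R : Type} [Ring R] {M : ModuleCat.{0} R}

theorem injective_of_injDimLE_zero (hM : InjDimLE R M 0) : Module.Injective R M := by
  obtain ⟨E, d, ε, hE, hε, hεd, -, hvan⟩ := hM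
  have : Subsingleton (E 1) := hvan 1 one_pos
  have hsurj : Function.Surjective ε := by
    rw [← LinearMap.range_eq_top, hεd, LinearMap.ker_eq_top]
    exact LinearMap.ext fun _ => Subsingleton.elim _ _
  exact ((Module.Baer.of_injective (hE 0)).of_equiv
    (LinearEquiv.ofBijective ε ⟨hε, hsurj⟩).symm).injective

theorem InjDimLE.exists_injective_cokernel {m : ℕ} (hM : InjDimLE R M (m + 1)) :
    ∃ (E : ModuleCat.{0} R) (ε : M →ₗ[R] E), Module.Injective R E ∧ Function.Injective ε ∧
      InjDimLE R (ModuleCat.of R (E ⧸ LinearMap.range ε)) m := by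
  obtain ⟨E, d, ε, hE, hε, hεd, hd, hvan⟩ := hM
  refine ⟨E 0, ε, hE 0, hε, fun i => E (i + 1), fun i => d (i + 1),
    (LinearMap.range ε).liftQ (d 0) hεd.le, fun i => hE (i + 1), ?_, ?_, fun i => hd (i + 1),
    fun i hi => hvan (i + 1) (by omega)⟩
  · rw [← LinearMap.ker_eq_bot]
    exact Submodule.ker_liftQ_eq_bot _ _ _ hεd.ge
  · rw [Submodule.range_liftQ]
    exact hd 0

end InjectiveDimension

namespace Cx

variable {R : Type} [Ring R] {C : Cx R}

theorem homOutExact_of_injective (hC : C.Acyclic) (M : ModuleCat.{0} R) [Module.Injective R M] :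
    C.HomOutExact M := by
  intro n f hf
  refine Module.Injective.exists_comp_eq_of_ker_le (C.d (n + 1)) f ?_
  rw [← hC n]
  rintro _ ⟨x, rfl⟩
  exact LinearMap.congr_fun hf x

theorem HomOutExact.of_exact (hP : ∀ k, Module.Projective R (C.X k)) {M E N : ModuleCat.{0} R}
    {ε : M →ₗ[R] E} {π : E →ₗ[R] N} (hε : Function.Injective ε) (hεπ : Function.Exact ε π)
    (hπ : Function.Surjective π) (hE : C.HomOutExact E) (hN : C.HomOutExact N) :
    C.HomOutExact M := by
  intro n f hf
  obtain ⟨G, hG⟩ := hE n (ε ∘ₗ f) (by rw [LinearMap.comp_assoc, hf, LinearMap.comp_zero])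
  obtain ⟨H, hH⟩ := hN (n + 1) (π ∘ₗ G) (by
    rw [LinearMap.comp_assoc, hG, ← LinearMap.comp_assoc, hεπ.linearMap_comp_eq_zero,
      LinearMap.zero_comp])
  obtain ⟨H', hH'⟩ := Module.projective_lifting_property π H hπ
  -- correcting `G` by the lift `H'` makes it land in the image of `M`
  obtain ⟨g, hg⟩ := hεπ.exists_comp_eq_of_comp_eq_zero hε (G - H' ∘ₗ C.d (n + 1 + 1)) (by
    rw [LinearMap.comp_sub, ← LinearMap.comp_assoc, hH', hH, sub_self])
  have hεg : ε ∘ₗ (g ∘ₗ C.d (n + 1)) = ε ∘ₗ f := by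
    rw [← LinearMap.comp_assoc, hg, LinearMap.sub_comp, LinearMap.comp_assoc, C.dd,
      LinearMap.comp_zero, sub_zero, hG]
  exact ⟨g, LinearMap.ext fun x => hε (LinearMap.congr_fun hεg x)⟩

theorem homOutExact_of_injDimLE (hC : C.Acyclic) (hP : ∀ k, Module.Projective R (C.X k))
    {M : ModuleCat.{0} R} {m : ℕ} (hM : InjDimLE R M m) : C.HomOutExact M := by
  induction m generalizing M with
  | zero =>
    have := injective_of_injDimLE_zero hM
    exact homOutExact_of_injective hC M
  | succ m ih =>
    obtain ⟨E, ε, hE, hε, hN⟩ := hM.exists_injective_cokernel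
    exact HomOutExact.of_exact hP hε (LinearMap.exact_map_mkQ_range ε)
      (Submodule.mkQ_surjective _) (homOutExact_of_injective hC E) (ih hN)

end Cx

/-- if every projective left `R`-module has injective dimension at most `n`
(`silp R ≤ n`), then every acyclic complex of projective left `R`-modules is totally acyclic. -/
theorem stmt1 (R : Type) [Ring R] (n : ℕ)
    (h : ∀ P : ModuleCat.{0} R, Module.Projective R P → InjDimLE R P n) :
    AllProjTotAc R :=
  fun _ hC hP M hM => Cx.homOutExact_of_injDimLE hC hP (h M hM)
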